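/- (Remark 3.2(b).) Let N ≥ 1 be an integer, let E and F be nonempty convex compact subsets of ℝ^N, let x, y ∈ ℝ^N and r > 0 be such that E ⊆ B(x,r) and F ⊆ B(y,r), where B(z,r) denotes the closed Euclidean ball of centre z and radius r. Then d(E,F)^{4/3} ≥ 2^{−1/3} |x − y|^{4/3} − (2r)^{4/3}. -/

import Mathlib

open MeasureTheory

/-- The class `ℰ` of bounded smooth real functions on `ℝ^N` whose partial derivatives of
order 1 and 2 are bounded by 1 in absolute value. -/
def memE {N : ℕ} (φ : EuclideanSpace ℝ (Fin N) → ℝ) : Prop :=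
  ContDiff ℝ (⊤ : ℕ∞) φ ∧ (∃ C : ℝ, ∀ x, |φ x| ≤ C) ∧
    (∀ x i, |fderiv ℝ φ x (EuclideanSpace.single i 1)| ≤ 1) ∧
    (∀ x i j,
      |fderiv ℝ (fun y => fderiv ℝ φ y (EuclideanSpace.single i 1)) x
        (EuclideanSpace.single j 1)| ≤ 1)

/-- The Davies distance `d(E,F) = sup_{φ ∈ ℰ} inf {φ(x) - φ(y) : x ∈ E, y ∈ F}`. -/
noncomputable def daviesDist {N : ℕ} (E F : Set (EuclideanSpace ℝ (Fin N))) : ℝ :=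
  ⨆ φ : {φ : EuclideanSpace ℝ (Fin N) → ℝ // memE φ},
    ⨅ p : E × F, (φ.1 p.1 - φ.1 p.2)

section Aux

local notation "⟪" a ", " b "⟫" => @inner ℝ _ _ a b

lemma euclid_decomp {N : ℕ} (v : EuclideanSpace ℝ (Fin N)) :
    v = ∑ i, v i • EuclideanSpace.single i (1 : ℝ) := by
  ext j
  rw [WithLp.ofLp_sum, Finset.sum_apply]
  simp [EuclideanSpace.single_apply]

lemma euclid_abs_le {N : ℕ} (v : EuclideanSpace ℝ (Fin N)) (i : Fin N) : |v i| ≤ ‖v‖ := by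
  have h := abs_real_inner_le_norm (EuclideanSpace.single i (1:ℝ)) v
  rw [EuclideanSpace.inner_single_left] at h
  simpa using h

lemma memE_fderiv_norm_le {N : ℕ} {φ : EuclideanSpace ℝ (Fin N) → ℝ} (hφ : memE φ)
    (z : EuclideanSpace ℝ (Fin N)) : ‖fderiv ℝ φ z‖ ≤ N := by
  apply ContinuousLinearMap.opNorm_le_bound _ (by positivity)
  intro v
  calc ‖fderiv ℝ φ z v‖ = ‖∑ i, v i * fderiv ℝ φ z (EuclideanSpace.single i 1)‖ := by
        conv_lhs => rw [euclid_decomp v]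
        rw [map_sum]
        simp [smul_eq_mul]
    _ ≤ ∑ i, ‖v i * fderiv ℝ φ z (EuclideanSpace.single i 1)‖ := norm_sum_le _ _
    _ ≤ ∑ _i : Fin N, ‖v‖ := by
        apply Finset.sum_le_sum
        intro i _
        rw [norm_mul]
        calc ‖v i‖ * ‖fderiv ℝ φ z (EuclideanSpace.single i 1)‖
            ≤ ‖v‖ * 1 := by
              apply mul_le_mul (euclid_abs_le v i) (hφ.2.2.1 z i) (abs_nonneg _) (norm_nonneg _)
          _ = ‖v‖ := mul_one _
    _ = N * ‖v‖ := by simp [Finset.sum_const, nsmul_eq_mul]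

lemma memE_lip {N : ℕ} {φ : EuclideanSpace ℝ (Fin N) → ℝ} (hφ : memE φ)
    (a b : EuclideanSpace ℝ (Fin N)) : φ a - φ b ≤ N * ‖a - b‖ := by
  have hdiff : ∀ z ∈ (Set.univ : Set (EuclideanSpace ℝ (Fin N))), DifferentiableAt ℝ φ z :=
    fun z _ => (hφ.1.differentiable (by simp)).differentiableAt
  have := Convex.norm_image_sub_le_of_norm_fderiv_le hdiff
    (fun z _ => memE_fderiv_norm_le hφ z) convex_univ (Set.mem_univ b) (Set.mem_univ a)
  calc φ a - φ b ≤ |φ a - φ b| := le_abs_self _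
    _ ≤ N * ‖a - b‖ := this

lemma davies_bddAbove {N : ℕ} {E F : Set (EuclideanSpace ℝ (Fin N))}
    (hEne : E.Nonempty) (hFne : F.Nonempty) :
    BddAbove (Set.range fun φ : {φ : EuclideanSpace ℝ (Fin N) → ℝ // memE φ} =>
      ⨅ p : E × F, (φ.1 p.1 - φ.1 p.2)) := by
  obtain ⟨e₀, he₀⟩ := hEne
  obtain ⟨f₀, hf₀⟩ := hFne
  refine ⟨N * ‖e₀ - f₀‖, ?_⟩
  rintro _ ⟨φ, rfl⟩
  obtain ⟨C, hC⟩ := φ.2.2.1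
  have hbdd : BddBelow (Set.range fun p : E × F => (φ.1 p.1 - φ.1 p.2)) := by
    refine ⟨-C - C, ?_⟩
    rintro _ ⟨p, rfl⟩
    dsimp only
    have h1 := (abs_le.1 (hC p.1)).1
    have h2 := (abs_le.1 (hC p.2)).2
    linarith
  exact le_trans (ciInf_le hbdd (⟨e₀, he₀⟩, ⟨f₀, hf₀⟩)) (memE_lip φ.2 e₀ f₀)

lemma memE_zero {N : ℕ} : memE (fun _ : EuclideanSpace ℝ (Fin N) => (0:ℝ)) := by
  refine ⟨contDiff_const, ⟨0, fun x => by simp⟩, ?_, ?_⟩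
  · intro x i; simp [fderiv_const]
  · intro x i j; simp [fderiv_const]

lemma davies_nonneg {N : ℕ} {E F : Set (EuclideanSpace ℝ (Fin N))}
    (hEne : E.Nonempty) (hFne : F.Nonempty) : 0 ≤ daviesDist E F := by
  have hne : Nonempty (E × F) :=
    ⟨⟨⟨hEne.choose, hEne.choose_spec⟩, ⟨hFne.choose, hFne.choose_spec⟩⟩⟩
  have h0 : (⨅ _p : E × F, ((0:ℝ) - 0)) = 0 := by simp
  have := le_ciSup (davies_bddAbove hEne hFne) (⟨_, memE_zero⟩ :
    {φ : EuclideanSpace ℝ (Fin N) → ℝ // memE φ})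
  rw [daviesDist]
  simpa [h0] using this

lemma sine_memE_and_gain {N : ℕ} (u : EuclideanSpace ℝ (Fin N)) (hu : ‖u‖ = 1)
    (ω c : ℝ) (hω : 0 < ω) (hω1 : ω ≤ 1) :
    ∃ φ : EuclideanSpace ℝ (Fin N) → ℝ,
      memE φ ∧ (∀ z, φ z = ω⁻¹ * Real.sin (ω * (⟪u, z⟫ - c))) := by
  set L := innerSL ℝ u with hL
  set t : EuclideanSpace ℝ (Fin N) → ℝ := fun z => ω * (L z - c) with htdef
  have ht : ∀ z, HasFDerivAt t (ω • (L : EuclideanSpace ℝ (Fin N) →L[ℝ] ℝ)) z :=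
    fun z => ((L.hasFDerivAt).sub_const c).const_mul ω
  have hφ' : ∀ z, HasFDerivAt (fun z => ω⁻¹ * Real.sin (t z))
      (ω⁻¹ • (Real.cos (t z) • (ω • (L : EuclideanSpace ℝ (Fin N) →L[ℝ] ℝ)))) z :=
    fun z => ((Real.hasDerivAt_sin (t z)).comp_hasFDerivAt z (ht z)).const_mul ω⁻¹
  have happ : ∀ i : Fin N, L (EuclideanSpace.single i (1:ℝ)) = u i := by
    intro i; simp [hL, EuclideanSpace.inner_single_right]
  have hui : ∀ i : Fin N, |u i| ≤ 1 := by
    intro i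
    have h := euclid_abs_le u i
    rwa [hu] at h
  have hval : ∀ z i, fderiv ℝ (fun z => ω⁻¹ * Real.sin (t z)) z
      (EuclideanSpace.single i (1:ℝ)) = Real.cos (t z) * u i := by
    intro z i
    rw [(hφ' z).fderiv]
    simp only [ContinuousLinearMap.smul_apply, happ, smul_eq_mul]
    field_simp
  refine ⟨fun z => ω⁻¹ * Real.sin (t z), ⟨?_, ?_, ?_, ?_⟩, fun z => rfl⟩
  · exact contDiff_const.mul (Real.contDiff_sin.comp
      (contDiff_const.mul (L.contDiff.sub contDiff_const)))
  · exact ⟨ω⁻¹, fun z => by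
      rw [abs_mul, abs_of_pos (inv_pos.2 hω)]
      nlinarith [abs_le.2 ⟨Real.neg_one_le_sin (t z), Real.sin_le_one (t z)⟩,
        inv_pos.2 hω]⟩
  · intro z i
    rw [hval z i, abs_mul]
    have h1 := abs_le.2 ⟨Real.neg_one_le_cos (t z), Real.cos_le_one (t z)⟩
    nlinarith [hui i, abs_nonneg (Real.cos (t z)), abs_nonneg (u i)]
  · intro z i j
    have hG : (fun y => fderiv ℝ (fun z => ω⁻¹ * Real.sin (t z)) y
        (EuclideanSpace.single i (1:ℝ))) = fun y => Real.cos (t y) * u i := by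
      funext w; exact hval w i
    rw [hG]
    have hG' : ∀ z, HasFDerivAt (fun y => Real.cos (t y) * u i)
        ((u i) • ((-Real.sin (t z)) • (ω • (L : EuclideanSpace ℝ (Fin N) →L[ℝ] ℝ)))) z :=
      fun z => ((Real.hasDerivAt_cos (t z)).comp_hasFDerivAt z (ht z)).mul_const (u i)
    rw [(hG' z).fderiv]
    simp only [ContinuousLinearMap.smul_apply, happ, smul_eq_mul]
    have h1 := abs_le.2 ⟨Real.neg_one_le_sin (t z), Real.sin_le_one (t z)⟩
    rw [abs_mul, abs_mul, abs_mul, abs_neg, abs_of_pos hω]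
    have h2 : ω * |u j| ≤ 1 := mul_le_one₀ hω1 (abs_nonneg _) (hui j)
    have h3 : |Real.sin (t z)| * (ω * |u j|) ≤ 1 := mul_le_one₀ h1 (by positivity) h2
    exact mul_le_one₀ (hui i) (by positivity) h3

lemma sine_gain {N : ℕ} {E F : Set (EuclideanSpace ℝ (Fin N))}
    (x y : EuclideanSpace ℝ (Fin N)) (r : ℝ) (hr : 0 < r)
    (hE : E ⊆ Metric.closedBall x r) (hF : F ⊆ Metric.closedBall y r)
    (hD : 2 * r < ‖x - y‖) (ω : ℝ) (hω : 0 < ω) (hω1 : ω ≤ 1)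
    (hωD : ω * (‖x - y‖ / 2 + r) ≤ Real.pi / 2) :
    ∃ φ : EuclideanSpace ℝ (Fin N) → ℝ, memE φ ∧
      ∀ e ∈ E, ∀ f ∈ F,
        2 * ω⁻¹ * Real.sin (ω * (‖x - y‖ / 2 - r)) ≤ φ e - φ f := by
  set D := ‖x - y‖ with hDdef
  have hD0 : 0 < D := lt_trans (by linarith) hD
  set u : EuclideanSpace ℝ (Fin N) := D⁻¹ • (x - y) with hudef
  have hu : ‖u‖ = 1 := by
    rw [hudef, norm_smul, norm_inv, Real.norm_eq_abs, abs_of_pos hD0]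
    field_simp
    rfl
  set c : ℝ := ⟪u, y⟫ + D / 2 with hcdef
  obtain ⟨φ, hmem, hform⟩ := sine_memE_and_gain u hu ω c hω hω1
  refine ⟨φ, hmem, ?_⟩
  intro e he f hf
  have hxy : ⟪u, x - y⟫ = D := by
    rw [hudef, real_inner_smul_left, real_inner_self_eq_norm_mul_norm]
    field_simp
    rfl
  have hinv : (0:ℝ) ≤ ω⁻¹ := le_of_lt (inv_pos.2 hω)
  have hpi : (0:ℝ) < Real.pi := Real.pi_pos
  have hbe : |⟪u, e - x⟫| ≤ r := by
    refine le_trans (abs_real_inner_le_norm u (e - x)) ?_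
    rw [hu, one_mul, ← dist_eq_norm]
    exact hE he
  have hbf : |⟪u, f - y⟫| ≤ r := by
    refine le_trans (abs_real_inner_le_norm u (f - y)) ?_
    rw [hu, one_mul, ← dist_eq_norm]
    exact hF hf
  have hex : ⟪u, e - x⟫ = ⟪u, e⟫ - ⟪u, x⟫ := inner_sub_right u e x
  have hfy : ⟪u, f - y⟫ = ⟪u, f⟫ - ⟪u, y⟫ := inner_sub_right u f y
  have hxy' : ⟪u, x - y⟫ = ⟪u, x⟫ - ⟪u, y⟫ := inner_sub_right u x y
  have habs_e := abs_le.1 hbe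
  have habs_f := abs_le.1 hbf
  set θe : ℝ := ω * (⟪u, e⟫ - c) with hθe
  set θf : ℝ := ω * (⟪u, f⟫ - c) with hθf
  have hθe_lb : ω * (D / 2 - r) ≤ θe := by
    rw [hθe]
    apply mul_le_mul_of_nonneg_left _ (le_of_lt hω)
    rw [hcdef]; linarith [habs_e.1, hxy]
  have hθe_ub : θe ≤ ω * (D / 2 + r) := by
    rw [hθe]
    apply mul_le_mul_of_nonneg_left _ (le_of_lt hω)
    rw [hcdef]; linarith [habs_e.2, hxy]
  have hθf_lb : -(ω * (D / 2 + r)) ≤ θf := by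
    rw [hθf, ← mul_neg]
    apply mul_le_mul_of_nonneg_left _ (le_of_lt hω)
    rw [hcdef]; linarith [habs_f.1]
  have hθf_ub : θf ≤ -(ω * (D / 2 - r)) := by
    rw [hθf, ← mul_neg]
    apply mul_le_mul_of_nonneg_left _ (le_of_lt hω)
    rw [hcdef]; linarith [habs_f.2]
  have hl0 : 0 ≤ ω * (D / 2 - r) := by
    apply mul_nonneg (le_of_lt hω); linarith
  have hmono := Real.strictMonoOn_sin.monotoneOn
  have hsin_e : Real.sin (ω * (D / 2 - r)) ≤ Real.sin θe := by
    apply hmono ⟨by linarith, by linarith [hθe_ub]⟩ ⟨by linarith, by linarith⟩ hθe_lb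
  have hsin_f : Real.sin θf ≤ -Real.sin (ω * (D / 2 - r)) := by
    have := hmono (⟨by linarith, by linarith⟩ : θf ∈ Set.Icc (-(Real.pi/2)) (Real.pi/2))
      ⟨by linarith, by linarith⟩ hθf_ub
    rwa [Real.sin_neg] at this
  rw [hform e, hform f]
  have A := mul_le_mul_of_nonneg_left hsin_e hinv
  have B := mul_le_mul_of_nonneg_left hsin_f hinv
  have hθe' : ω * (⟪u, e⟫ - c) = θe := rfl
  have hθf' : ω * (⟪u, f⟫ - c) = θf := rfl
  rw [hθe', hθf']
  nlinarith [A, B]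

lemma davies_ge_sub {N : ℕ} {E F : Set (EuclideanSpace ℝ (Fin N))}
    (hEne : E.Nonempty) (hFne : F.Nonempty)
    (x y : EuclideanSpace ℝ (Fin N)) (r : ℝ) (hr : 0 < r)
    (hE : E ⊆ Metric.closedBall x r) (hF : F ⊆ Metric.closedBall y r) :
    ‖x - y‖ - 2 * r ≤ daviesDist E F := by
  rcases le_or_gt (‖x - y‖) (2 * r) with h | h
  · linarith [davies_nonneg hEne hFne]
  · by_contra hcon
    push_neg at hcon
    haveI : Nonempty E := hEne.to_subtype
    haveI : Nonempty F := hFne.to_subtype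
    set d := daviesDist E F with hd
    set D := ‖x - y‖ with hDdef
    have hD0 : 0 < D := lt_trans (by linarith) h
    have hℓ : 0 < D - 2 * r := by linarith
    set δ : ℝ := (D - 2 * r) - d with hδdef
    have hδ : 0 < δ := by rw [hδdef]; linarith
    set ω : ℝ := min (min 1 ((D + 2 * r)⁻¹)) (Real.sqrt (8 * δ / (D - 2 * r) ^ 3)) with hωdef
    have hωpos : 0 < ω := lt_min (lt_min one_pos (inv_pos.2 (by positivity)))
      (Real.sqrt_pos.2 (by positivity))
    have hω1 : ω ≤ 1 := le_trans (min_le_left _ _) (min_le_left _ _)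
    have hω2 : ω ≤ (D + 2 * r)⁻¹ := le_trans (min_le_left _ _) (min_le_right _ _)
    have hω3 : ω ≤ Real.sqrt (8 * δ / (D - 2 * r) ^ 3) := min_le_right _ _
    have hhalf : ω * (D / 2 + r) ≤ 1 / 2 := by
      have h1 : ω * (D / 2 + r) ≤ (D + 2 * r)⁻¹ * (D / 2 + r) :=
        mul_le_mul_of_nonneg_right hω2 (by positivity)
      have h2 : (D + 2 * r)⁻¹ * (D / 2 + r) = 1 / 2 := by
        field_simp
      linarith
    have hωD : ω * (D / 2 + r) ≤ Real.pi / 2 := by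
      have := Real.pi_gt_three
      linarith
    obtain ⟨φ, hmem, hgain⟩ := sine_gain x y r hr hE hF h ω hωpos hω1 hωD
    have hd_ge : 2 * ω⁻¹ * Real.sin (ω * (D / 2 - r)) ≤ d := by
      refine le_trans (le_ciInf fun p : E × F => hgain p.1.1 p.1.2 p.2.1 p.2.2) ?_
      exact le_ciSup (davies_bddAbove hEne hFne)
        (⟨φ, hmem⟩ : {φ : EuclideanSpace ℝ (Fin N) → ℝ // memE φ})
    set a : ℝ := ω * (D / 2 - r) with hadef
    have ha1 : 0 < a := mul_pos hωpos (by linarith)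
    have ha2 : a ≤ 1 := by
      have : a ≤ ω * (D / 2 + r) := mul_le_mul_of_nonneg_left (by linarith) (le_of_lt hωpos)
      linarith
    have hsin : a - a ^ 3 / 4 < Real.sin a :=
      lt_of_le_of_lt (by nlinarith [pow_pos ha1 3]) (Real.sin_gt_sub_cube ha1)
    have hcalc : 2 * ω⁻¹ * (a - a ^ 3 / 4) = (D - 2 * r) - ω ^ 2 * (D - 2 * r) ^ 3 / 16 := by
      rw [hadef]
      field_simp
      ring
    have hω2' : ω ^ 2 ≤ 8 * δ / (D - 2 * r) ^ 3 := by
      calc ω ^ 2 ≤ Real.sqrt (8 * δ / (D - 2 * r) ^ 3) ^ 2 :=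
            pow_le_pow_left₀ (le_of_lt hωpos) hω3 2
        _ = 8 * δ / (D - 2 * r) ^ 3 := Real.sq_sqrt (by positivity)
    have hsmall : ω ^ 2 * (D - 2 * r) ^ 3 / 16 ≤ δ / 2 := by
      have h3 : (0:ℝ) < (D - 2 * r) ^ 3 := by positivity
      rw [le_div_iff₀ h3] at hω2'
      nlinarith
    have hmono2 : 2 * ω⁻¹ * (a - a ^ 3 / 4) ≤ 2 * ω⁻¹ * Real.sin a := by
      apply mul_le_mul_of_nonneg_left (le_of_lt hsin)
      positivity
    rw [hcalc] at hmono2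
    have : (D - 2 * r) - δ / 2 ≤ d := by linarith
    rw [hδdef] at this
    linarith

end Aux

/-- **Remark 3.2(b)**: if `E, F` are nonempty convex compact subsets of `ℝ^N` with
`E ⊆ B(x,r)` and `F ⊆ B(y,r)`, then `d(E,F)^{4/3} ≥ 2^{-1/3}|x-y|^{4/3} - (2r)^{4/3}`. -/
theorem davies_dist_ball_lower_bound (N : ℕ) (hN : 1 ≤ N)
    (E F : Set (EuclideanSpace ℝ (Fin N)))
    (hEne : E.Nonempty) (hFne : F.Nonempty)
    (hEconv : Convex ℝ E) (hFconv : Convex ℝ F)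
    (hEcomp : IsCompact E) (hFcomp : IsCompact F)
    (x y : EuclideanSpace ℝ (Fin N)) (r : ℝ) (hr : 0 < r)
    (hE : E ⊆ Metric.closedBall x r) (hF : F ⊆ Metric.closedBall y r) :
    daviesDist E F ^ ((4 : ℝ) / 3) ≥
      (2 : ℝ) ^ (-(1 : ℝ) / 3) * ‖x - y‖ ^ ((4 : ℝ) / 3) - (2 * r) ^ ((4 : ℝ) / 3) := by
  have hd0 : 0 ≤ daviesDist E F := davies_nonneg hEne hFne
  have hdl : ‖x - y‖ - 2 * r ≤ daviesDist E F := davies_ge_sub hEne hFne x y r hr hE hF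
  set d := daviesDist E F with hddef
  set D := ‖x - y‖ with hDdef
  have hD0 : 0 ≤ D := norm_nonneg _
  have hr2 : (0:ℝ) ≤ 2 * r := by linarith
  rcases le_or_gt D (2 * r) with h | h
  · have h1 : D ^ ((4:ℝ)/3) ≤ (2 * r) ^ ((4:ℝ)/3) :=
      Real.rpow_le_rpow hD0 h (by norm_num)
    have h2 : (2:ℝ) ^ (-(1:ℝ)/3) ≤ 1 :=
      Real.rpow_le_one_of_one_le_of_nonpos (by norm_num) (by norm_num)
    have h3 : (2:ℝ) ^ (-(1:ℝ)/3) * D ^ ((4:ℝ)/3) ≤ D ^ ((4:ℝ)/3) :=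
      mul_le_of_le_one_left (Real.rpow_nonneg hD0 _) h2
    have h4 : 0 ≤ d ^ ((4:ℝ)/3) := Real.rpow_nonneg hd0 _
    linarith
  · have hsub : (0:ℝ) ≤ D - 2 * r := by linarith
    have h1 : (D - 2 * r) ^ ((4:ℝ)/3) ≤ d ^ ((4:ℝ)/3) :=
      Real.rpow_le_rpow hsub (by linarith) (by norm_num)
    -- key convexity inequality
    have key : (2:ℝ) ^ (-(1:ℝ)/3) * D ^ ((4:ℝ)/3) ≤
        (D - 2 * r) ^ ((4:ℝ)/3) + (2 * r) ^ ((4:ℝ)/3) := by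
      set a : NNReal := Real.toNNReal (D - 2 * r) with ha
      set b : NNReal := Real.toNNReal (2 * r) with hb
      have hnn := NNReal.rpow_add_le_mul_rpow_add_rpow a b (p := (4:ℝ)/3) (by norm_num)
      have hcoe := (NNReal.coe_le_coe).2 hnn
      push_cast [NNReal.coe_rpow] at hcoe
      rw [ha, hb, Real.coe_toNNReal _ hsub, Real.coe_toNNReal _ hr2] at hcoe
      have hab : (D - 2 * r) + 2 * r = D := by ring
      rw [hab] at hcoe
      have hexp : (4:ℝ)/3 - 1 = 1/3 := by norm_num
      rw [hexp] at hcoe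
      have hmul := mul_le_mul_of_nonneg_left hcoe
        (Real.rpow_nonneg (by norm_num : (0:ℝ) ≤ 2) (-(1:ℝ)/3))
      have h2 : (2:ℝ) ^ (-(1:ℝ)/3) * ((2:ℝ) ^ ((1:ℝ)/3) *
          ((D - 2 * r) ^ ((4:ℝ)/3) + (2 * r) ^ ((4:ℝ)/3))) =
          (D - 2 * r) ^ ((4:ℝ)/3) + (2 * r) ^ ((4:ℝ)/3) := by
        rw [← mul_assoc, ← Real.rpow_add (by norm_num : (0:ℝ) < 2)]
        norm_num
      rw [h2] at hmul
      exact hmul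
    linarith
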